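/- Let 0 ≠ w ∈ ℝ^d and λ > 0, and for f ∈ ℝ^{n×d} and a ∈ ℝⁿ set E(x;f,a,w) = ½‖f−x‖_F² + λ‖xw−a‖. If f, f̃ ∈ ℝ^{n×d} and a, ã ∈ ℝⁿ satisfy ‖fw−a‖ < ‖f̃w−ã‖, then min_{x∈ℝ^{n×d}} E(x;f,a,w) < min_{x∈ℝ^{n×d}} E(x;f̃,ã,w). -/

import Mathlib

/-!
With `A x = x w`, the map `A` is `‖w‖`-Lipschitz for the Frobenius norm, and `v ↦ v wᵀ / ‖w‖²` is a
right inverse of `A` with norm `1 / ‖w‖`. The reverse triangle inequality gives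
`|‖A f - a‖ - ‖A x - a‖| ≤ ‖w‖ ‖f - x‖`, so the energy of every `x` is at least the minimum over
`s ≥ 0` of `(r - s)² / (2‖w‖²) + λ s`, where `r = ‖f w - a‖`. That minimum is a Huber function of
`r`, and it is attained by moving `f` against the right-inverse image of the residual `f w - a`,
by the fraction `min 1 (λ ‖w‖² / r)` of it.
So the minimal energy is a Huber function of `r`, which is strictly increasing on `[0, ∞)`.
-/

/-- The Huber function with threshold `lam * c ^ 2`, divided by `c ^ 2`; it is the minimum of
`(r - s) ^ 2 / (2 * c ^ 2) + lam * s` over `s ≥ 0`. -/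
noncomputable def huber (lam c r : ℝ) : ℝ :=
  if r ≤ lam * c ^ 2 then r ^ 2 / (2 * c ^ 2) else lam * r - lam ^ 2 * c ^ 2 / 2

theorem huber_le_sq_div_add {c : ℝ} (hc : 0 < c) (lam r : ℝ) {s : ℝ} (hs : 0 ≤ s) :
    huber lam c r ≤ (r - s) ^ 2 / (2 * c ^ 2) + lam * s := by
  unfold huber
  split_ifs with hr
  · have hgap : (r - s) ^ 2 / (2 * c ^ 2) + lam * s - r ^ 2 / (2 * c ^ 2)
        = s * (s + 2 * (lam * c ^ 2 - r)) / (2 * c ^ 2) := by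
      field_simp; ring
    have hr' := sub_nonneg.2 hr
    have : 0 ≤ s * (s + 2 * (lam * c ^ 2 - r)) / (2 * c ^ 2) := by positivity
    linarith
  · have hgap : (r - s) ^ 2 / (2 * c ^ 2) + lam * s - (lam * r - lam ^ 2 * c ^ 2 / 2)
        = (r - s - lam * c ^ 2) ^ 2 / (2 * c ^ 2) := by
      field_simp; ring
    have : 0 ≤ (r - s - lam * c ^ 2) ^ 2 / (2 * c ^ 2) := by positivity
    linarith

theorem strictMonoOn_huber {lam c : ℝ} (hlam : 0 < lam) (hc : 0 < c) :
    StrictMonoOn (huber lam c) (Set.Ici 0) := by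
  intro r hr r' _ hrr'
  have hc2 : 0 < 2 * c ^ 2 := by positivity
  have hδ : 0 < lam * c ^ 2 := by positivity
  unfold huber
  split_ifs with h h' h'
  · gcongr
  · rw [div_lt_iff₀ hc2]
    nlinarith [mul_le_mul h h (Set.mem_Ici.1 hr) hδ.le, mul_lt_mul_of_pos_left (not_le.1 h') hδ]
  · linarith
  · nlinarith

section ProxEnergy

variable {E F : Type*} [SeminormedAddCommGroup E] [NormedSpace ℝ E]
  [SeminormedAddCommGroup F] [NormedSpace ℝ F]

noncomputable def proxEnergy (A : E →ₗ[ℝ] F) (lam : ℝ) (f : E) (a : F) (x : E) : ℝ :=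
  ‖f - x‖ ^ 2 / 2 + lam * ‖A x - a‖

theorem huber_le_proxEnergy {c : ℝ} (hc : 0 < c) (A : E →ₗ[ℝ] F) (hA : ∀ y, ‖A y‖ ≤ c * ‖y‖)
    (lam : ℝ) (f x : E) (a : F) :
    huber lam c ‖A f - a‖ ≤ proxEnergy A lam f a x := by
  have hdiff : |‖A f - a‖ - ‖A x - a‖| ≤ c * ‖f - x‖ := calc
    _ ≤ ‖(A f - a) - (A x - a)‖ := abs_norm_sub_norm_le _ _
    _ = ‖A (f - x)‖ := by rw [sub_sub_sub_cancel_right, map_sub]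
    _ ≤ c * ‖f - x‖ := hA _
  have hsq : (‖A f - a‖ - ‖A x - a‖) ^ 2 / (2 * c ^ 2) ≤ ‖f - x‖ ^ 2 / 2 := calc
    _ = |‖A f - a‖ - ‖A x - a‖| ^ 2 / (2 * c ^ 2) := by rw [sq_abs]
    _ ≤ (c * ‖f - x‖) ^ 2 / (2 * c ^ 2) := by gcongr
    _ = ‖f - x‖ ^ 2 / 2 := by field_simp
  unfold proxEnergy
  linarith [huber_le_sq_div_add hc lam ‖A f - a‖ (norm_nonneg (A x - a))]

theorem proxEnergy_sub_smul_le {c : ℝ} (hc : 0 < c) (A : E →ₗ[ℝ] F) (lam : ℝ) (f y : E) (a : F)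
    (hy : A y = A f - a) (hyc : c * ‖y‖ ≤ ‖A f - a‖) {t : ℝ} (ht₀ : 0 ≤ t) (ht₁ : t ≤ 1) :
    proxEnergy A lam f a (f - t • y)
      ≤ t ^ 2 * ‖A f - a‖ ^ 2 / (2 * c ^ 2) + lam * ((1 - t) * ‖A f - a‖) := by
  have hresid : A (f - t • y) - a = (1 - t) • (A f - a) := by
    rw [map_sub, map_smul, hy]; module
  have hy' : ‖y‖ ≤ ‖A f - a‖ / c := by rw [le_div_iff₀ hc]; linarith
  rw [proxEnergy, sub_sub_cancel, hresid, norm_smul, norm_smul, Real.norm_of_nonneg ht₀,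
    Real.norm_of_nonneg (sub_nonneg.2 ht₁)]
  calc (t * ‖y‖) ^ 2 / 2 + lam * ((1 - t) * ‖A f - a‖)
      ≤ (t * (‖A f - a‖ / c)) ^ 2 / 2 + lam * ((1 - t) * ‖A f - a‖) := by gcongr
    _ = t ^ 2 * ‖A f - a‖ ^ 2 / (2 * c ^ 2) + lam * ((1 - t) * ‖A f - a‖) := by
      field_simp

theorem exists_proxEnergy_le_huber {lam c : ℝ} (hlam : 0 < lam) (hc : 0 < c) (A : E →ₗ[ℝ] F)
    (hA : ∀ v, ∃ y, A y = v ∧ c * ‖y‖ ≤ ‖v‖) (f : E) (a : F) :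
    ∃ x, proxEnergy A lam f a x ≤ huber lam c ‖A f - a‖ := by
  obtain ⟨y, hy, hyc⟩ := hA (A f - a)
  unfold huber
  split_ifs with hr
  · refine ⟨f - (1 : ℝ) • y, ?_⟩
    calc _ ≤ _ := proxEnergy_sub_smul_le hc A lam f y a hy hyc zero_le_one le_rfl
      _ = ‖A f - a‖ ^ 2 / (2 * c ^ 2) := by ring
  · have hδ : 0 < lam * c ^ 2 := by positivity
    have hr₀ : 0 < ‖A f - a‖ := hδ.trans (not_le.1 hr)
    refine ⟨f - (lam * c ^ 2 / ‖A f - a‖) • y, ?_⟩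
    calc _ ≤ _ := proxEnergy_sub_smul_le hc A lam f y a hy hyc (by positivity)
          (div_le_one_of_le₀ (not_le.1 hr).le hr₀.le)
      _ = lam * ‖A f - a‖ - lam ^ 2 * c ^ 2 / 2 := by field_simp; ring

theorem isLeast_range_proxEnergy {lam c : ℝ} (hlam : 0 < lam) (hc : 0 < c) (A : E →ₗ[ℝ] F)
    (hA_le : ∀ y, ‖A y‖ ≤ c * ‖y‖) (hA_surj : ∀ v, ∃ y, A y = v ∧ c * ‖y‖ ≤ ‖v‖)
    (f : E) (a : F) :
    IsLeast (Set.range (proxEnergy A lam f a)) (huber lam c ‖A f - a‖) := by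
  obtain ⟨x, hx⟩ := exists_proxEnergy_le_huber hlam hc A hA_surj f a
  refine ⟨⟨x, le_antisymm hx (huber_le_proxEnergy hc A hA_le lam f x a)⟩, ?_⟩
  rintro _ ⟨x, rfl⟩
  exact huber_le_proxEnergy hc A hA_le lam f x a

end ProxEnergy

attribute [local instance] Matrix.frobeniusNormedAddCommGroup Matrix.frobeniusNormedSpace

section MatrixMulVec

open Matrix WithLp

variable {m n : Type*} [Fintype n]

def matrixMulVecₗ (w : n → ℝ) : Matrix m n ℝ →ₗ[ℝ] EuclideanSpace ℝ m :=
  (WithLp.linearEquiv 2 ℝ (m → ℝ)).symm.toLinearMap ∘ₗ (mulVecBilin ℝ ℝ).flip w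

theorem matrixMulVecₗ_apply (w : n → ℝ) (x : Matrix m n ℝ) :
    matrixMulVecₗ w x = toLp 2 (x *ᵥ w) := rfl

variable [Fintype m]

theorem norm_matrixMulVecₗ_le (w : n → ℝ) (x : Matrix m n ℝ) :
    ‖matrixMulVecₗ w x‖ ≤ ‖toLp 2 w‖ * ‖x‖ := by
  rw [matrixMulVecₗ_apply, ← frobenius_norm_replicateCol (ι := Unit), replicateCol_mulVec,
    ← frobenius_norm_replicateCol (ι := Unit), mul_comm]
  exact frobenius_norm_mul _ _

theorem exists_matrixMulVecₗ_eq {w : n → ℝ} (hw : w ≠ 0) (v : EuclideanSpace ℝ m) :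
    ∃ y, matrixMulVecₗ w y = v ∧ ‖toLp 2 w‖ * ‖y‖ ≤ ‖v‖ := by
  have hw' : 0 < ‖toLp 2 w‖ := norm_pos_iff.2 (by simpa using hw)
  refine ⟨(‖toLp 2 w‖ ^ 2)⁻¹ • vecMulVec (ofLp v) w, ?_, ?_⟩
  · have hww : w ⬝ᵥ w = ‖toLp 2 w‖ ^ 2 := by
      rw [EuclideanSpace.real_norm_sq_eq, dotProduct]; simp [sq]
    rw [matrixMulVecₗ_apply, smul_mulVec, vecMulVec_mulVec, hww, op_smul_eq_smul, smul_smul,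
      inv_mul_cancel₀ (by positivity), one_smul, toLp_ofLp]
  · have hvw : ‖vecMulVec (ofLp v) w‖ ≤ ‖v‖ * ‖toLp 2 w‖ := by
      rw [vecMulVec_eq Unit]
      calc _ ≤ _ := frobenius_norm_mul _ _
        _ = _ := by rw [frobenius_norm_replicateCol, frobenius_norm_replicateRow, toLp_ofLp]
    rw [norm_smul, norm_inv, norm_pow, norm_norm]
    calc _ ≤ ‖toLp 2 w‖ * ((‖toLp 2 w‖ ^ 2)⁻¹ * (‖v‖ * ‖toLp 2 w‖)) := by gcongr
      _ = ‖v‖ := by field_simp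

theorem Matrix.frobenius_norm_sq_eq_sum (x : Matrix m n ℝ) :
    ‖x‖ ^ 2 = ∑ i, ∑ j, x i j ^ 2 := by
  rw [frobenius_norm_def, ← Real.sqrt_eq_rpow, Real.sq_sqrt (by positivity)]
  simp

theorem norm_matrixMulVecₗ_sub (w : n → ℝ) (x : Matrix m n ℝ) (a : m → ℝ) :
    ‖matrixMulVecₗ w x - toLp 2 a‖ = √(∑ i, (∑ j, x i j * w j - a i) ^ 2) := by
  simp [EuclideanSpace.norm_eq, matrixMulVecₗ_apply, mulVec, dotProduct]

theorem sInf_range_energy_eq_huber {lam : ℝ} (hlam : 0 < lam) {w : n → ℝ} (hw : w ≠ 0)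
    (f : Matrix m n ℝ) (a : m → ℝ) :
    sInf (Set.range fun x : Matrix m n ℝ => 1 / 2 * ∑ i, ∑ j, (f i j - x i j) ^ 2
        + lam * √(∑ i, (∑ j, x i j * w j - a i) ^ 2))
      = huber lam ‖toLp 2 w‖ √(∑ i, (∑ j, f i j * w j - a i) ^ 2) := by
  have hc : 0 < ‖toLp 2 w‖ := norm_pos_iff.2 (by simpa using hw)
  have henergy : (fun x : Matrix m n ℝ => 1 / 2 * ∑ i, ∑ j, (f i j - x i j) ^ 2
      + lam * √(∑ i, (∑ j, x i j * w j - a i) ^ 2))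
      = proxEnergy (matrixMulVecₗ w) lam f (toLp 2 a) := by
    funext x
    rw [proxEnergy, frobenius_norm_sq_eq_sum, norm_matrixMulVecₗ_sub]
    simp only [Matrix.sub_apply]
    ring
  have hleast := isLeast_range_proxEnergy hlam hc (matrixMulVecₗ w) (norm_matrixMulVecₗ_le w)
    (exists_matrixMulVecₗ_eq hw) f (toLp 2 a)
  rw [henergy, ← norm_matrixMulVecₗ_sub w f a, hleast.csInf_eq]

end MatrixMulVec

theorem second_order_tv_prox_value_strict_mono
    (n d : ℕ) (w : Fin d → ℝ) (hw : w ≠ 0) (lam : ℝ) (hlam : 0 < lam)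
    (E : (Fin n → Fin d → ℝ) → (Fin n → Fin d → ℝ) → (Fin n → ℝ) → ℝ)
    (hE : ∀ x f a, E x f a = (1 / 2) * (∑ i, ∑ j, (f i j - x i j) ^ 2)
        + lam * Real.sqrt (∑ i, (∑ j, x i j * w j - a i) ^ 2))
    (f ftil : Fin n → Fin d → ℝ) (a atil : Fin n → ℝ)
    (h : Real.sqrt (∑ i, (∑ j, f i j * w j - a i) ^ 2)
       < Real.sqrt (∑ i, (∑ j, ftil i j * w j - atil i) ^ 2)) :
    sInf (Set.range fun x => E x f a) < sInf (Set.range fun x => E x ftil atil) := by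
  have hc : 0 < ‖WithLp.toLp 2 w‖ := norm_pos_iff.2 (by simpa using hw)
  simp only [hE]
  calc _ = huber lam ‖WithLp.toLp 2 w‖ √(∑ i, (∑ j, f i j * w j - a i) ^ 2) :=
        sInf_range_energy_eq_huber hlam hw f a
    _ < huber lam ‖WithLp.toLp 2 w‖ √(∑ i, (∑ j, ftil i j * w j - atil i) ^ 2) :=
        strictMonoOn_huber hlam hc (Real.sqrt_nonneg _) (Real.sqrt_nonneg _) h
    _ = _ := (sInf_range_energy_eq_huber hlam hw ftil atil).symm
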